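/- arXiv:1902.02404 — 4 statements merged into one kernel-verified Lean document; each statement's English description precedes it below -/
import Mathlib

section
/- The flow-firing process on face configurations starting from any finitely supported integer configuration terminates: there is no infinite sequence of firing steps. -/
def Nb (a b : ℤ × ℤ) : Prop := |a.1 - b.1| + |a.2 - b.2| = 1

def FinSupp (F : ℤ × ℤ → ℤ) : Prop := {τ | F τ ≠ 0}.Finite

/-- A firing step: neighbors `a`, `b` with `F a ≥ F b + 2`; `F a` decreases by 1 and
`F b` increases by 1. -/
def Step (F F' : ℤ × ℤ → ℤ) : Prop :=
  ∃ a b : ℤ × ℤ, Nb a b ∧ F b + 2 ≤ F a ∧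
    F' = Function.update (Function.update F a (F a - 1)) b (F b + 1)

/-! Firing from `a` to a neighbour `b` with `F a ≥ F b + 2` changes the sum of squares
`∑ F τ ^ 2` by `-2 (F a - F b - 1) ≤ -2`. Finite support is preserved, so this sum is a
well-defined nonnegative integer that strictly decreases along any firing sequence, which
therefore cannot be infinite. -/

open Function

section Energy

variable {α : Type*}

lemma support_update_subset_insert {M : Type*} [Zero M] [DecidableEq α] (f : α → M) (a : α)
    (v : M) : support (update f a v) ⊆ insert a (support f) := by
  intro x hx
  by_cases hxa : x = a
  · exact .inl hxa
  · exact .inr (by rwa [mem_support, update_of_ne hxa] at hx)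

lemma Set.Finite.support_update {M : Type*} [Zero M] [DecidableEq α] {f : α → M}
    (hf : (support f).Finite) (a : α) (v : M) : (support (update f a v)).Finite :=
  (hf.insert a).subset (support_update_subset_insert f a v)

lemma finsum_update {M : Type*} [AddCommGroup M] [DecidableEq α] {f : α → M}
    (hf : (support f).Finite) (a : α) (v : M) :
    ∑ᶠ x, update f a v x = ∑ᶠ x, f x - f a + v := by
  set s := insert a hf.toFinset
  have has : a ∈ s := Finset.mem_insert_self a _
  have hfs : support f ⊆ s := by simp [s, Set.subset_insert]
  have hus : support (update f a v) ⊆ s :=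
    (support_update_subset_insert f a v).trans (by simp [s])
  rw [finsum_eq_sum_of_support_subset _ hus, finsum_eq_sum_of_support_subset _ hfs,
    Finset.sum_update_of_mem has, Finset.sum_eq_add_sum_sdiff_singleton_of_mem has f]
  abel

noncomputable def energy (F : α → ℤ) : ℤ := ∑ᶠ x, F x ^ 2

lemma energy_nonneg (F : α → ℤ) : 0 ≤ energy F :=
  finsum_nonneg fun _ => sq_nonneg _

lemma energy_update [DecidableEq α] {F : α → ℤ} (hF : (support F).Finite) (a : α) (v : ℤ) :
    energy (update F a v) = energy F - F a ^ 2 + v ^ 2 := by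
  have hsq : (support fun x => F x ^ 2).Finite := (support_pow F two_ne_zero).symm ▸ hF
  have hcomp : (fun x => update F a v x ^ 2) = update (fun x => F x ^ 2) a (v ^ 2) :=
    comp_update (· ^ 2) F a v
  rw [energy, hcomp, finsum_update hsq]
  rfl

def fire [DecidableEq α] (F : α → ℤ) (a b : α) : α → ℤ :=
  update (update F a (F a - 1)) b (F b + 1)

lemma Set.Finite.support_fire [DecidableEq α] {F : α → ℤ} (hF : (support F).Finite) (a b : α) :
    (support (fire F a b)).Finite :=
  (hF.support_update a _).support_update b _

lemma energy_fire [DecidableEq α] {F : α → ℤ} (hF : (support F).Finite) {a b : α} (hab : a ≠ b) :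
    energy (fire F a b) = energy F - 2 * (F a - F b - 1) := by
  rw [fire, energy_update (hF.support_update a _), energy_update hF, update_of_ne hab.symm]
  ring

end Energy

lemma Nb.ne {a b : ℤ × ℤ} (h : Nb a b) : a ≠ b := by
  rintro rfl
  simp [Nb] at h

lemma Step.finSupp {F F' : ℤ × ℤ → ℤ} (h : Step F F') (hF : FinSupp F) : FinSupp F' := by
  obtain ⟨a, b, -, -, rfl⟩ := h
  exact Set.Finite.support_fire hF a b

lemma Step.energy_lt {F F' : ℤ × ℤ → ℤ} (h : Step F F') (hF : FinSupp F) :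
    energy F' < energy F := by
  obtain ⟨a, b, hab, hfire, rfl⟩ := h
  change energy (fire F a b) < energy F
  rw [energy_fire hF hab.ne]
  omega

/-- The flow-firing process terminates from any finitely supported configuration. -/
theorem stmt1 (F₀ : ℤ × ℤ → ℤ) (hfin : FinSupp F₀) :
    ¬ ∃ seq : ℕ → (ℤ × ℤ → ℤ), seq 0 = F₀ ∧ ∀ n, Step (seq n) (seq (n + 1)) := by
  rintro ⟨seq, rfl, hstep⟩
  have hfinSupp : ∀ n, FinSupp (seq n) := fun n =>
    Nat.rec hfin (fun n ih => (hstep n).finSupp ih) n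
  refine not_strictAnti_of_wellFoundedLT (fun n => (energy (seq n)).toNat)
    (strictAnti_nat_of_succ_lt fun n => ?_)
  have hlt := (hstep n).energy_lt (hfinSupp n)
  have hnonneg := energy_nonneg (seq (n + 1))
  omega
end

section
/- The configuration K• defined by K• σ = k and K• τ = max(0, k − dist(σ,τ) + 1) for τ ≠ σ is stable for the flow-firing process with distinguished face σ: no firing step applies to it. -/
/-- Manhattan distance between faces. -/
def mdist (a b : ℤ × ℤ) : ℤ := |a.1 - b.1| + |a.2 - b.2|

/-- Firing step for the process with distinguished face `σ`. -/
def StepD (σ : ℤ × ℤ) (F F' : ℤ × ℤ → ℤ) : Prop :=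
  (∃ a b : ℤ × ℤ, a ≠ σ ∧ b ≠ σ ∧ Nb a b ∧ F b + 2 ≤ F a ∧
      F' = Function.update (Function.update F a (F a - 1)) b (F b + 1)) ∨
  (∃ a : ℤ × ℤ, Nb a σ ∧ F a < F σ ∧ F' = Function.update F a (F a + 1)) ∨
  (∃ a : ℤ × ℤ, Nb a σ ∧ F σ < F a ∧ F' = Function.update F a (F a - 1))

/-- Initial configuration: `k` at `σ`, zero elsewhere. -/
def Kinit (σ : ℤ × ℤ) (k : ℤ) : ℤ × ℤ → ℤ := fun τ => if τ = σ then k else 0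

/-- The "Aztec pyramid" configuration. -/
def Kbullet (σ : ℤ × ℤ) (k : ℤ) : ℤ × ℤ → ℤ :=
  fun τ => if τ = σ then k else max 0 (k - mdist σ τ + 1)

lemma mdist_ne (σ a : ℤ × ℤ) (h : a ≠ σ) : 1 ≤ mdist σ a := by
  unfold mdist
  rcases eq_or_ne a.1 σ.1 with h1 | h1
  · rcases eq_or_ne a.2 σ.2 with h2 | h2
    · exact absurd (Prod.ext h1 h2) h
    · have := abs_pos.mpr (show σ.2 - a.2 ≠ 0 by omega)
      have := abs_nonneg (σ.1 - a.1); omega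
  · have := abs_pos.mpr (show σ.1 - a.1 ≠ 0 by omega)
    have := abs_nonneg (σ.2 - a.2); omega

lemma mdist_nb (σ a b : ℤ × ℤ) (h : Nb a b) :
    mdist σ a ≤ mdist σ b + 1 := by
  unfold Nb at h
  unfold mdist
  have h1 := abs_sub_abs_le_abs_sub (σ.1 - a.1) (σ.1 - b.1)
  have h2 := abs_sub_abs_le_abs_sub (σ.2 - a.2) (σ.2 - b.2)
  have e1 : σ.1 - a.1 - (σ.1 - b.1) = -(a.1 - b.1) := by ring
  have e2 : σ.2 - a.2 - (σ.2 - b.2) = -(a.2 - b.2) := by ring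
  rw [e1, abs_neg] at h1
  rw [e2, abs_neg] at h2
  omega

lemma nb_symm (a b : ℤ × ℤ) (h : Nb a b) : Nb b a := by
  unfold Nb at *
  rw [abs_sub_comm b.1 a.1, abs_sub_comm b.2 a.2]; exact h

lemma nb_ne (a b : ℤ × ℤ) (h : Nb a b) : a ≠ b := by
  intro he; subst he; unfold Nb at h; simp at h

lemma Kbullet_self (σ : ℤ × ℤ) (k : ℤ) : Kbullet σ k σ = k := by
  simp [Kbullet]

lemma Kbullet_ne (σ a : ℤ × ℤ) (k : ℤ) (h : a ≠ σ) :
    Kbullet σ k a = max 0 (k - mdist σ a + 1) := by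
  simp [Kbullet, h]

lemma nb_mdist (σ a : ℤ × ℤ) (h : Nb a σ) : mdist σ a = 1 := by
  unfold Nb at h; unfold mdist
  rw [abs_sub_comm σ.1 a.1, abs_sub_comm σ.2 a.2]; exact h

/-- The Aztec pyramid configuration is stable. -/
theorem stmt9 (σ : ℤ × ℤ) (k : ℤ) (hk : 0 ≤ k) :
    ¬ ∃ F', StepD σ (Kbullet σ k) F' := by
  rintro ⟨F', h | h | h⟩
  · obtain ⟨a, b, ha, hb, hnb, hle, -⟩ := h
    have hda := mdist_ne σ a ha
    have hdb := mdist_ne σ b hb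
    have hab := mdist_nb σ a b hnb
    have hba := mdist_nb σ b a (nb_symm a b hnb)
    rw [Kbullet_ne σ a k ha, Kbullet_ne σ b k hb] at hle
    omega
  · obtain ⟨a, hnb, hlt, -⟩ := h
    have ha : a ≠ σ := nb_ne a σ hnb
    rw [Kbullet_ne σ a k ha, Kbullet_self, nb_mdist σ a hnb] at hlt
    omega
  · obtain ⟨a, hnb, hlt, -⟩ := h
    have ha : a ≠ σ := nb_ne a σ hnb
    rw [Kbullet_ne σ a k ha, Kbullet_self, nb_mdist σ a hnb] at hlt
    omega
end

section
/- If the edge flow configuration f on the grid has a vertex v with |inflow(v) − outflow(v)| > 4, then some edge incident to v carries at least 2 units of flow (in absolute value); since edge-firing preserves inflow(v) − outflow(v), the flow-firing process never terminates from such a configuration. -/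
/-- An edge of the grid: `(v, false)` is the horizontal edge from `v` to `v + (1,0)`,
`(v, true)` is the vertical edge from `v` to `v + (0,1)`. -/
abbrev Edge := (ℤ × ℤ) × Bool

/-- The boundary of the square face with lower-left corner `σ`, traversed
counterclockwise, as an edge chain. -/
def bdry (σ : ℤ × ℤ) : Edge → ℤ := fun e =>
  (if e = ((σ.1, σ.2), false) then 1 else 0) +
  (if e = ((σ.1 + 1, σ.2), true) then 1 else 0) -
  (if e = ((σ.1, σ.2 + 1), false) then 1 else 0) -
  (if e = ((σ.1, σ.2), true) then 1 else 0)

/-- `inflow(v) - outflow(v)` for the edge flow `f`. -/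
def netflow (f : Edge → ℤ) (v : ℤ × ℤ) : ℤ :=
  f ((v.1 - 1, v.2), false) + f ((v.1, v.2 - 1), true)
    - f ((v.1, v.2), false) - f ((v.1, v.2), true)

/-- The two faces containing an edge. -/
def facesOf (e : Edge) : (ℤ × ℤ) × (ℤ × ℤ) :=
  if e.2 then (e.1, (e.1.1 - 1, e.1.2)) else (e.1, (e.1.1, e.1.2 - 1))

/-- Edge-firing: an edge `e` with `|f e| ≥ 2` fires by rerouting one unit of flow
(in the direction of the flow on `e`) around each of the two faces containing `e`. -/
def EStep (f f' : Edge → ℤ) : Prop :=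
  ∃ e : Edge, 2 ≤ |f e| ∧
    f' = fun x => f x - (if 0 ≤ f e then 1 else -1) *
      (bdry (facesOf e).1 e * bdry (facesOf e).1 x +
       bdry (facesOf e).2 e * bdry (facesOf e).2 x)

theorem netflow_bdry (σ v : ℤ × ℤ) : netflow (bdry σ) v = 0 := by
  simp only [netflow, bdry, Prod.mk.injEq, and_true, and_false, Bool.false_eq_true,
    Bool.true_eq_false, if_false, add_zero, sub_zero]
  split_ifs <;> omega

theorem netflow_sub_mul_bdry_add (f : Edge → ℤ) (v σ₁ σ₂ : ℤ × ℤ) (c a b : ℤ) :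
    netflow (fun x => f x - c * (a * bdry σ₁ x + b * bdry σ₂ x)) v = netflow f v := by
  have h₁ := netflow_bdry σ₁ v
  have h₂ := netflow_bdry σ₂ v
  simp only [netflow] at h₁ h₂ ⊢
  linear_combination (-c * a) * h₁ + (-c * b) * h₂

theorem EStep.netflow_eq {f f' : Edge → ℤ} (hs : EStep f f') (v : ℤ × ℤ) :
    netflow f' v = netflow f v := by
  obtain ⟨e, -, rfl⟩ := hs
  exact netflow_sub_mul_bdry_add f v _ _ _ _ _

theorem netflow_eq_of_reflTransGen {f g : Edge → ℤ} (hfg : Relation.ReflTransGen EStep f g)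
    (v : ℤ × ℤ) : netflow g v = netflow f v := by
  induction hfg with
  | refl => rfl
  | tail _ hs ih => rw [hs.netflow_eq, ih]

theorem exists_two_le_abs_of_four_lt_abs_netflow {f : Edge → ℤ} {v : ℤ × ℤ}
    (h : 4 < |netflow f v|) :
    ∃ e ∈ ({((v.1, v.2), false), ((v.1, v.2), true),
              ((v.1 - 1, v.2), false), ((v.1, v.2 - 1), true)} : Set Edge),
      2 ≤ |f e| := by
  by_contra! hsmall
  have h₁ := abs_lt.mp (hsmall ((v.1, v.2), false) (by simp))
  have h₂ := abs_lt.mp (hsmall ((v.1, v.2), true) (by simp))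
  have h₃ := abs_lt.mp (hsmall ((v.1 - 1, v.2), false) (by simp))
  have h₄ := abs_lt.mp (hsmall ((v.1, v.2 - 1), true) (by simp))
  rw [netflow, lt_abs] at h
  omega

theorem exists_eStep_of_two_le_abs {f : Edge → ℤ} {e : Edge} (he : 2 ≤ |f e|) :
    ∃ f', EStep f f' :=
  ⟨_, e, he, rfl⟩

/-- If `|inflow(v) - outflow(v)| > 4` then some edge at `v` can fire, and the
flow-firing process never terminates from such a configuration. -/
theorem stmt12 (f : Edge → ℤ) (v : ℤ × ℤ) (h : 4 < |netflow f v|) :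
    (∃ e ∈ ({((v.1, v.2), false), ((v.1, v.2), true),
              ((v.1 - 1, v.2), false), ((v.1, v.2 - 1), true)} : Set Edge),
        2 ≤ |f e|) ∧
    ∀ g : Edge → ℤ, Relation.ReflTransGen EStep f g → ∃ g', EStep g g' := by
  refine ⟨exists_two_le_abs_of_four_lt_abs_netflow h, fun g hfg => ?_⟩
  rw [← netflow_eq_of_reflTransGen hfg] at h
  obtain ⟨e, -, he⟩ := exists_two_le_abs_of_four_lt_abs_netflow h
  exact exists_eStep_of_two_le_abs he
end

section
/- Every finitely supported conservative integer flow on the edges of the grid is induced by some finitely supported face configuration: f = ∂₂ F, where ∂₂ takes a face configuration to the edge flow given on each edge by the difference of the circulations on its two incident faces. -/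
/-- The edge flow induced by a face configuration: each edge gets the signed
difference of the circulations on its two incident faces. -/
def d2 (F : ℤ × ℤ → ℤ) : Edge → ℤ := fun e =>
  if e.2 then F (e.1.1 - 1, e.1.2) - F e.1 else F e.1 - F (e.1.1, e.1.2 - 1)

/-!
Put on each face the flux of `f` through the vertical edges to its right,
`F (x, y) = ∑_{a > x} f ((a, y), vertical)`. The vertical components of `d2 F = f` are then
immediate. Conservation at `(x, y)` says that the horizontal defect
`x ↦ F (x, y) - F (x, y - 1) - f ((x, y), horizontal)` is unchanged by `x ↦ x - 1`; it vanishes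
for large `x`, hence everywhere. Applied in a column `x` outside the support of `f`, the same
identity makes `F (x, ·)` constant, and it is zero high up, so `F` is finitely supported.
-/

open Finset

lemma Int.apply_eq_apply_of_apply_sub_one {α : Type*} {g : ℤ → α}
    (h : ∀ x, g (x - 1) = g x) (x y : ℤ) : g x = g y := by
  have hg : Function.Periodic g 1 := fun x => by simpa using (h (x + 1)).symm
  simpa using (hg.int_mul_eq x).trans (hg.int_mul_eq y).symm

lemma Finset.sum_Ioc_sub_one_sub_sum_Ioc {M : Type*} [AddCommGroup M] {g : ℤ → M} {N : ℤ}
    (hg : ∀ a, N < a → g a = 0) (x : ℤ) :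
    ∑ a ∈ Ioc (x - 1) N, g a - ∑ a ∈ Ioc x N, g a = g x := by
  by_cases hx : x ≤ N
  · rw [← insert_Ioc_left_eq_Ioc_sub_one_of_not_isMin hx (not_isMin x),
      sum_insert (by simp), add_sub_cancel_right]
  · rw [Ioc_eq_empty (by omega), Ioc_eq_empty (by omega), hg x (by omega), sum_empty, sub_zero]

lemma exists_support_subset_box {f : Edge → ℤ} (hfin : {e : Edge | f e ≠ 0}.Finite) :
    ∃ N : ℤ, ∀ e : Edge, f e ≠ 0 → -N < e.1.1 ∧ e.1.1 < N ∧ -N < e.1.2 ∧ e.1.2 < N := by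
  obtain ⟨M, hM⟩ := (hfin.image fun e : Edge => |e.1.1| + |e.1.2|).bddAbove
  refine ⟨M + 1, fun e he => ?_⟩
  have hle : |e.1.1| + |e.1.2| ≤ M := hM ⟨e, he, rfl⟩
  have := abs_nonneg e.1.1
  have := abs_nonneg e.1.2
  have := abs_lt.1 (show |e.1.1| < M + 1 by linarith)
  have := abs_lt.1 (show |e.1.2| < M + 1 by linarith)
  omega

-- Truncating at column `N` is harmless once `f` vanishes from column `N` on.
noncomputable def rightFlux (f : Edge → ℤ) (N : ℤ) (τ : ℤ × ℤ) : ℤ :=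
  ∑ a ∈ Ioc τ.1 N, f ((a, τ.2), true)

section rightFlux

variable {f : Edge → ℤ} {N : ℤ}
  (hN : ∀ e : Edge, f e ≠ 0 → -N < e.1.1 ∧ e.1.1 < N ∧ -N < e.1.2 ∧ e.1.2 < N)
include hN

lemma apply_eq_zero_of_not_mem_box {a b : ℤ} {s : Bool}
    (h : ¬(-N < a ∧ a < N ∧ -N < b ∧ b < N)) : f ((a, b), s) = 0 :=
  not_imp_comm.1 (hN _) h

lemma rightFlux_sub_one_sub_rightFlux (x y : ℤ) :
    rightFlux f N (x - 1, y) - rightFlux f N (x, y) = f ((x, y), true) :=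
  sum_Ioc_sub_one_sub_sum_Ioc (fun a ha => apply_eq_zero_of_not_mem_box hN (by omega)) x

lemma rightFlux_eq_zero_of_le_abs_snd (x : ℤ) {y : ℤ} (hy : N ≤ |y|) :
    rightFlux f N (x, y) = 0 := by
  have := le_abs'.1 hy
  exact sum_eq_zero fun a _ => apply_eq_zero_of_not_mem_box hN (by omega)

variable (hcons : ∀ v : ℤ × ℤ, netflow f v = 0)
include hcons

lemma rightFlux_sub_rightFlux_sub_one (x y : ℤ) :
    rightFlux f N (x, y) - rightFlux f N (x, y - 1) = f ((x, y), false) := by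
  set defect : ℤ → ℤ := fun x =>
    rightFlux f N (x, y) - rightFlux f N (x, y - 1) - f ((x, y), false)
  have hshift : ∀ x, defect (x - 1) = defect x := fun x => by
    have hv := rightFlux_sub_one_sub_rightFlux hN x y
    have hv' := rightFlux_sub_one_sub_rightFlux hN x (y - 1)
    have hx := hcons (x, y)
    simp only [netflow, defect] at hv hv' hx ⊢
    linarith
  have hfar : defect N = 0 := by
    have hedge : f ((N, y), false) = 0 := apply_eq_zero_of_not_mem_box hN (by omega)
    simp only [defect, rightFlux, Ioc_self, sum_empty, hedge, sub_zero]
  linarith [Int.apply_eq_apply_of_apply_sub_one hshift x N]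

lemma d2_rightFlux : d2 (rightFlux f N) = f := by
  funext ⟨⟨x, y⟩, b⟩
  cases b
  · exact rightFlux_sub_rightFlux_sub_one hN hcons x y
  · exact rightFlux_sub_one_sub_rightFlux hN x y

lemma rightFlux_eq_zero_of_le_abs_fst {x : ℤ} (hx : N ≤ |x|) (y : ℤ) :
    rightFlux f N (x, y) = 0 := by
  have := le_abs'.1 hx
  have hcolumn : ∀ y, rightFlux f N (x, y - 1) = rightFlux f N (x, y) := fun y => by
    have := rightFlux_sub_rightFlux_sub_one hN hcons x y
    rw [apply_eq_zero_of_not_mem_box hN (by omega)] at this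
    linarith
  rw [Int.apply_eq_apply_of_apply_sub_one (g := fun y => rightFlux f N (x, y)) hcolumn y N,
    rightFlux_eq_zero_of_le_abs_snd hN x (le_abs_self N)]

lemma finSupp_rightFlux : FinSupp (rightFlux f N) := by
  refine (Set.finite_Icc (-N, -N) (N, N)).subset fun ⟨x, y⟩ hτ => ?_
  have hx := abs_lt.1 (not_le.1 (mt (rightFlux_eq_zero_of_le_abs_fst hN hcons · y) hτ))
  have hy := abs_lt.1 (not_le.1 (mt (rightFlux_eq_zero_of_le_abs_snd hN x) hτ))
  simp only [Set.mem_Icc, Prod.mk_le_mk]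
  omega

end rightFlux

/-- Every finitely supported conservative flow is induced by a finitely supported
face configuration. -/
theorem stmt14 (f : Edge → ℤ) (hfin : {e : Edge | f e ≠ 0}.Finite)
    (hcons : ∀ v : ℤ × ℤ, netflow f v = 0) :
    ∃ F : ℤ × ℤ → ℤ, FinSupp F ∧ f = d2 F := by
  obtain ⟨N, hN⟩ := exists_support_subset_box hfin
  exact ⟨rightFlux f N, finSupp_rightFlux hN hcons, (d2_rightFlux hN hcons).symm⟩
end
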